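/- Let n = 1, ħ > 0, and let Σ = [[σ_xx, σ_xp],[σ_xp, σ_pp]] be a real symmetric positive definite 2×2 matrix with D = σ_xx σ_pp − σ_xp² > 0. Let Ω_Σ = {(x,p) ∈ ℝ² : (σ_pp/(2D))x² − (σ_xp/D)xp + (σ_xx/(2D))p² ≤ 1} be the covariance ellipse and Ω_Σ^{ħ,ω} its symplectic ħ-polar dual. For a ∈ ℝ let ℓ_a = {(x, ax) : x ∈ ℝ}. Then the inclusion Ω_Σ^{ħ,ω} ∩ ℓ_a ⊆ Ω_Σ ∩ ℓ_a holds for some (equivalently, for every) a ∈ ℝ if and only if D ≥ ħ²/4. -/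
import Mathlib

set_option maxHeartbeats 800000


noncomputable section

/-- The standard symplectic form on ℝ²: ω((x,p),(x′,p′)) = xp′ − px′. -/
def symp2 (z z' : ℝ × ℝ) : ℝ := z.1 * z'.2 - z.2 * z'.1

/-- Symplectic ℏ-polar dual of a subset of ℝ². -/
def sympDual2 (ℏ : ℝ) (Ω : Set (ℝ × ℝ)) : Set (ℝ × ℝ) :=
  {w | ∀ z ∈ Ω, symp2 z w ≤ ℏ}

/-- The line ℓ_a = {(x, ax) : x ∈ ℝ} (a Lagrangian plane in ℝ²). -/
def line (a : ℝ) : Set (ℝ × ℝ) := {z | z.2 = a * z.1}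

lemma r_pos (σxx σxp σpp a : ℝ) (hσxx : 0 < σxx)
    (hDpos : 0 < σxx * σpp - σxp ^ 2) :
    0 < σxx * a ^ 2 - 2 * σxp * a + σpp := by
  nlinarith [sq_nonneg (σxx * a - σxp)]

lemma fwd_lemma (ℏ : ℝ) (hℏ : 0 < ℏ)
    (σxx σxp σpp D : ℝ) (hσxx : 0 < σxx) (hσpp : 0 < σpp)
    (hD : D = σxx * σpp - σxp ^ 2) (hDpos : 0 < D)
    (hRS : ℏ ^ 2 / 4 ≤ D) (a : ℝ) :
    sympDual2 ℏ {z : ℝ × ℝ |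
      σpp / (2 * D) * z.1 ^ 2 - σxp / D * z.1 * z.2 + σxx / (2 * D) * z.2 ^ 2 ≤ 1}
      ∩ line a ⊆ {z : ℝ × ℝ |
      σpp / (2 * D) * z.1 ^ 2 - σxp / D * z.1 * z.2 + σxx / (2 * D) * z.2 ^ 2 ≤ 1}
      ∩ line a := by
  rintro w ⟨hw, hl⟩
  obtain ⟨r, hrdef⟩ : ∃ r : ℝ, r = σxx * a ^ 2 - 2 * σxp * a + σpp := ⟨_, rfl⟩
  obtain ⟨u, hudef⟩ : ∃ u : ℝ, u = σxx * a - σxp := ⟨_, rfl⟩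
  obtain ⟨v, hvdef⟩ : ∃ v : ℝ, v = σxp * a - σpp := ⟨_, rfl⟩
  have hr : 0 < r := by
    rw [hrdef]
    have := r_pos σxx σxp σpp a hσxx (hD ▸ hDpos); linarith
  obtain ⟨c0, hc0def⟩ : ∃ c0 : ℝ, c0 = Real.sqrt (2 / r) := ⟨_, rfl⟩
  have hc0pos : 0 < c0 := hc0def ▸ Real.sqrt_pos.mpr (by positivity)
  have hc0sq : c0 ^ 2 = 2 / r := hc0def ▸ Real.sq_sqrt (by positivity)
  obtain ⟨c, hcdef⟩ : ∃ c : ℝ, c = if 0 ≤ w.1 then c0 else -c0 := ⟨_, rfl⟩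
  have hcsq : c ^ 2 = 2 / r := by
    by_cases h : 0 ≤ w.1 <;> simp [hcdef, h, hc0sq]
  have hcsqr : c ^ 2 * r = 2 := by
    rw [hcsq]; field_simp
  have hcw : 0 ≤ c * w.1 := by
    by_cases h : 0 ≤ w.1
    · rw [hcdef, if_pos h]; positivity
    · rw [hcdef, if_neg h]
      push_neg at h
      nlinarith
  -- the point z = (c*u, c*v) is in Ω (on the boundary)
  have hzΩ : σpp / (2 * D) * (c * u) ^ 2 - σxp / D * (c * u) * (c * v)
      + σxx / (2 * D) * (c * v) ^ 2 ≤ 1 := by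
    have hval : σpp * (c * u) ^ 2 - 2 * σxp * (c * u) * (c * v)
        + σxx * (c * v) ^ 2 = c ^ 2 * (D * r) := by
      rw [hD, hudef, hvdef, hrdef]; ring
    have heq : σpp / (2 * D) * (c * u) ^ 2 - σxp / D * (c * u) * (c * v)
        + σxx / (2 * D) * (c * v) ^ 2
        = (σpp * (c * u) ^ 2 - 2 * σxp * (c * u) * (c * v)
          + σxx * (c * v) ^ 2) / (2 * D) := by ring
    rw [heq, hval, div_le_one (by positivity)]
    nlinarith [hcsqr]
  have hkey := hw (c * u, c * v) hzΩ
  -- symp2 (c*u, c*v) w = c * w.1 * r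
  have hl' : w.2 = a * w.1 := hl
  have hsymp : symp2 (c * u, c * v) w = c * w.1 * r := by
    simp only [symp2, hl']
    rw [hudef, hvdef, hrdef]; ring
  rw [hsymp] at hkey
  -- square the inequality
  have hsq : (c * w.1 * r) * (c * w.1 * r) ≤ ℏ * ℏ :=
    mul_self_le_mul_self (by positivity) hkey
  have hsq2 : 2 * (w.1 ^ 2 * r) ≤ ℏ ^ 2 := by nlinarith [hcsqr, hr]
  refine ⟨?_, hl⟩
  show σpp / (2 * D) * w.1 ^ 2 - σxp / D * w.1 * w.2 + σxx / (2 * D) * w.2 ^ 2 ≤ 1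
  rw [hl]
  have heq : σpp / (2 * D) * w.1 ^ 2 - σxp / D * w.1 * (a * w.1)
      + σxx / (2 * D) * (a * w.1) ^ 2 = w.1 ^ 2 * r / (2 * D) := by
    rw [hrdef]; ring
  rw [heq, div_le_one (by positivity)]
  linarith
lemma bwd_lemma (ℏ : ℝ) (hℏ : 0 < ℏ)
    (σxx σxp σpp D : ℝ) (hσxx : 0 < σxx) (hσpp : 0 < σpp)
    (hD : D = σxx * σpp - σxp ^ 2) (hDpos : 0 < D) (a : ℝ)
    (hincl : sympDual2 ℏ {z : ℝ × ℝ |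
      σpp / (2 * D) * z.1 ^ 2 - σxp / D * z.1 * z.2 + σxx / (2 * D) * z.2 ^ 2 ≤ 1}
      ∩ line a ⊆ {z : ℝ × ℝ |
      σpp / (2 * D) * z.1 ^ 2 - σxp / D * z.1 * z.2 + σxx / (2 * D) * z.2 ^ 2 ≤ 1}
      ∩ line a) : ℏ ^ 2 / 4 ≤ D := by
  obtain ⟨r, hrdef⟩ : ∃ r : ℝ, r = σxx * a ^ 2 - 2 * σxp * a + σpp := ⟨_, rfl⟩
  have hr : 0 < r := by
    rw [hrdef]
    have := r_pos σxx σxp σpp a hσxx (hD ▸ hDpos); linarith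
  obtain ⟨s, hsdef⟩ : ∃ s : ℝ, s = Real.sqrt (2 * r) := ⟨_, rfl⟩
  have hspos : 0 < s := hsdef ▸ Real.sqrt_pos.mpr (by positivity)
  have hssq : s ^ 2 = 2 * r := hsdef ▸ Real.sq_sqrt (by positivity)
  obtain ⟨t, htdef⟩ : ∃ t : ℝ, t = ℏ / s := ⟨_, rfl⟩
  have htpos : 0 < t := htdef ▸ by positivity
  have hts : t * s = ℏ := htdef ▸ div_mul_cancel₀ ℏ (ne_of_gt hspos)
  have hwdual : (t, a * t) ∈ sympDual2 ℏ {z : ℝ × ℝ |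
      σpp / (2 * D) * z.1 ^ 2 - σxp / D * z.1 * z.2 + σxx / (2 * D) * z.2 ^ 2 ≤ 1} := by
    intro z hz
    simp only [Set.mem_setOf_eq] at hz
    have heq : σpp / (2 * D) * z.1 ^ 2 - σxp / D * z.1 * z.2 + σxx / (2 * D) * z.2 ^ 2
        = (σpp * z.1 ^ 2 - 2 * σxp * z.1 * z.2 + σxx * z.2 ^ 2) / (2 * D) := by ring
    rw [heq, div_le_one (by positivity)] at hz
    -- Cauchy–Schwarz: (a z1 - z2)^2 ≤ 2 r
    have hiden : r * (σpp * z.1 ^ 2 - 2 * σxp * z.1 * z.2 + σxx * z.2 ^ 2)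
        - D * (a * z.1 - z.2) ^ 2
        = ((σxx * a - σxp) * z.2 - (σxp * a - σpp) * z.1) ^ 2 := by
      rw [hD, hrdef]; ring
    have hcs : (a * z.1 - z.2) ^ 2 ≤ 2 * r := by
      nlinarith [sq_nonneg ((σxx * a - σxp) * z.2 - (σxp * a - σpp) * z.1),
        mul_pos hDpos hr]
    have hXs : a * z.1 - z.2 ≤ s := by nlinarith [hssq, hspos]
    show z.1 * (a * t) - z.2 * t ≤ ℏ
    calc z.1 * (a * t) - z.2 * t = t * (a * z.1 - z.2) := by ring
      _ ≤ t * s := by nlinarith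
      _ = ℏ := hts
  have hwline : (t, a * t) ∈ line a := rfl
  have hwΩ := (hincl ⟨hwdual, hwline⟩).1
  simp only [Set.mem_setOf_eq] at hwΩ
  have heq : σpp / (2 * D) * t ^ 2 - σxp / D * t * (a * t) + σxx / (2 * D) * (a * t) ^ 2
      = t ^ 2 * r / (2 * D) := by rw [hrdef]; ring
  rw [heq, div_le_one (by positivity)] at hwΩ
  have ht2 : t ^ 2 * (2 * r) = ℏ ^ 2 := by
    rw [← hssq, htdef]
    field_simp
  nlinarith [hwΩ, ht2, hr]

/-- For the covariance ellipse of a 2×2 covariance matrix, the inclusion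
Ω_Σ^{ℏ,ω} ∩ ℓ_a ⊆ Ω_Σ ∩ ℓ_a holds for some (equivalently every) a ∈ ℝ iff
D = σ_xx σ_pp − σ_xp² ≥ ℏ²/4 (the Robertson–Schrödinger inequality). -/
theorem covariance_ellipse_tomography (ℏ : ℝ) (hℏ : 0 < ℏ)
    (σxx σxp σpp D : ℝ) (hσxx : 0 < σxx) (hσpp : 0 < σpp)
    (hD : D = σxx * σpp - σxp ^ 2) (hDpos : 0 < D)
    (Ω : Set (ℝ × ℝ))
    (hΩ : Ω = {z : ℝ × ℝ |
      σpp / (2 * D) * z.1 ^ 2 - σxp / D * z.1 * z.2 + σxx / (2 * D) * z.2 ^ 2 ≤ 1}) :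
    ((∃ a : ℝ, sympDual2 ℏ Ω ∩ line a ⊆ Ω ∩ line a) ↔ ℏ ^ 2 / 4 ≤ D) ∧
    ((∀ a : ℝ, sympDual2 ℏ Ω ∩ line a ⊆ Ω ∩ line a) ↔ ℏ ^ 2 / 4 ≤ D) := by
  subst hΩ
  refine ⟨⟨fun ⟨a, h⟩ => bwd_lemma ℏ hℏ σxx σxp σpp D hσxx hσpp hD hDpos a h,
    fun h => ⟨0, fwd_lemma ℏ hℏ σxx σxp σpp D hσxx hσpp hD hDpos h 0⟩⟩,
    ⟨fun h => bwd_lemma ℏ hℏ σxx σxp σpp D hσxx hσpp hD hDpos 0 (h 0),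
    fun h a => fwd_lemma ℏ hℏ σxx σxp σpp D hσxx hσpp hD hDpos h a⟩⟩
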